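/- Let Λ be a row-finite, locally convex k-graph. Fix v ∈ Λ^0, m ≠ n ∈ ℕ^k, and p ∈ ℕ^k such that p ∧ d(x₀) = 0 for some x₀ ∈ vΛ^{≤∞}. Then the following are equivalent: (i) for every z ∈ vΛ^{≤∞} and every l ∈ ℕ^k, (z;(p+m, p+m+l)) ≈ (z;(p+n, p+n+l)); (ii) Λ has local periodicity m, n at v. (Statement (i) expresses that the desourcification of Λ has local periodicity m, n at the vertex [x₀;p], whose image under the canonical projection π is v; thus this is the content of the Proposition that the desourcification has local periodicity m,n at a vertex w if and only if Λ has local periodicity m,n at π(w).) -/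

import Mathlib

open scoped ENat

/-- `q ≤ m` coordinatewise, where `q ∈ ℕ^k` and `m ∈ (ℕ ∪ {∞})^k`. -/
def leDeg (k : ℕ) (q : Fin k → ℕ) (m : Fin k → ℕ∞) : Prop :=
  ∀ i, (q i : ℕ∞) ≤ m i

/-- The coordinatewise minimum `m ∧ d` of `m ∈ ℕ^k` and `d ∈ (ℕ ∪ {∞})^k`,
viewed as an element of `ℕ^k`. -/
noncomputable def wedge {k : ℕ} (m : Fin k → ℕ) (dx : Fin k → ℕ∞) : Fin k → ℕ :=
  fun i => ((m i : ℕ∞) ⊓ dx i).toNat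

lemma wedge_coe {k : ℕ} (m : Fin k → ℕ) (dx : Fin k → ℕ∞) (i : Fin k) :
    ((wedge m dx i : ℕ)  : ℕ∞) = (m i : ℕ∞) ⊓ dx i := by
  have h : (m i : ℕ∞) ⊓ dx i ≠ ⊤ :=
    (inf_le_left.trans_lt (ENat.coe_lt_top (m i))).ne
  simpa [wedge] using ENat.coe_toNat h

lemma wedge_leDeg {k : ℕ} (m : Fin k → ℕ) (dx : Fin k → ℕ∞) :
    leDeg k (wedge m dx) dx := by
  intro i
  rw [wedge_coe]
  exact inf_le_right

/-- The data of a countable-free small category with a degree map: the underlying data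
of a `k`-graph. -/
structure KGraphData (k : ℕ) where
  Obj : Type
  Mor : Type
  r : Mor → Obj
  s : Mor → Obj
  idm : Obj → Mor
  comp : Mor → Mor → Mor
  d : Mor → Fin k → ℕ

/-- The axioms making `Λ` a `k`-graph: a small category together with a degree functor
`d : Λ → ℕ^k` satisfying the factorisation property. (Composition `comp f g` is only
constrained when `s f = r g`.) -/
structure IsKGraph {k : ℕ} (Λ : KGraphData k) : Prop where
  r_id : ∀ v, Λ.r (Λ.idm v) = v
  s_id : ∀ v, Λ.s (Λ.idm v) = v
  id_comp : ∀ f, Λ.comp (Λ.idm (Λ.r f)) f = f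
  comp_id : ∀ f, Λ.comp f (Λ.idm (Λ.s f)) = f
  r_comp : ∀ f g, Λ.s f = Λ.r g → Λ.r (Λ.comp f g) = Λ.r f
  s_comp : ∀ f g, Λ.s f = Λ.r g → Λ.s (Λ.comp f g) = Λ.s g
  assoc : ∀ f g h, Λ.s f = Λ.r g → Λ.s g = Λ.r h →
    Λ.comp (Λ.comp f g) h = Λ.comp f (Λ.comp g h)
  d_id : ∀ v, Λ.d (Λ.idm v) = 0
  d_comp : ∀ f g, Λ.s f = Λ.r g → Λ.d (Λ.comp f g) = Λ.d f + Λ.d g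
  factor : ∀ (f : Λ.Mor) (m n : Fin k → ℕ), Λ.d f = m + n →
    ∃! p : Λ.Mor × Λ.Mor, Λ.s p.1 = Λ.r p.2 ∧ Λ.d p.1 = m ∧ Λ.d p.2 = n ∧
      Λ.comp p.1 p.2 = f

/-- `Λ` is row-finite: `vΛ^n` is finite for every vertex `v` and degree `n`. -/
def RowFinite {k : ℕ} (Λ : KGraphData k) : Prop :=
  ∀ (v : Λ.Obj) (n : Fin k → ℕ), {f : Λ.Mor | Λ.r f = v ∧ Λ.d f = n}.Finite

/-- `Λ` is locally convex. -/
def LocallyConvex {k : ℕ} (Λ : KGraphData k) : Prop :=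
  ∀ (i j : Fin k), i ≠ j → ∀ lam mu : Λ.Mor,
    Λ.d lam = Pi.single i 1 → Λ.d mu = Pi.single j 1 → Λ.r lam = Λ.r mu →
    (∃ f, Λ.r f = Λ.s lam ∧ Λ.d f = Pi.single j 1) ∧
    (∃ g, Λ.r g = Λ.s mu ∧ Λ.d g = Pi.single i 1)

/-- A boundary path of `Λ`: a degree-preserving functor `x : Ω_{k,m} → Λ`
(encoded by its vertex map `vert` and segment map `seg`, constrained on
pairs `p ≤ q ≤ m = deg`) such that whenever `p ≤ m` and `p i = m i`,
`x(p)Λ^{e_i} = ∅`. -/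
structure BPath (k : ℕ) (Λ : KGraphData k) where
  deg : Fin k → ℕ∞
  vert : (Fin k → ℕ) → Λ.Obj
  seg : (Fin k → ℕ) → (Fin k → ℕ) → Λ.Mor
  seg_r : ∀ p q, p ≤ q → leDeg k q deg → Λ.r (seg p q) = vert p
  seg_s : ∀ p q, p ≤ q → leDeg k q deg → Λ.s (seg p q) = vert q
  seg_deg : ∀ p q, p ≤ q → leDeg k q deg → Λ.d (seg p q) = q - p
  seg_id : ∀ p, leDeg k p deg → seg p p = Λ.idm (vert p)
  seg_comp : ∀ p q t, p ≤ q → q ≤ t → leDeg k t deg →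
    Λ.comp (seg p q) (seg q t) = seg p t
  boundary : ∀ (p : Fin k → ℕ) (i : Fin k), leDeg k p deg → (p i : ℕ∞) = deg i →
    ∀ e : Λ.Mor, Λ.r e = vert p → Λ.d e ≠ Pi.single i 1

/-- Equality of boundary paths as functors: same degree and the same segments on
the common (valid) domain. -/
def BPath.eqv {k : ℕ} {Λ : KGraphData k} (x y : BPath k Λ) : Prop :=
  x.deg = y.deg ∧ ∀ p q, p ≤ q → leDeg k q x.deg → x.seg p q = y.seg p q

lemma leDeg_add {k : ℕ} {n q : Fin k → ℕ} {D : Fin k → ℕ∞}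
    (hn : leDeg k n D) (hq : leDeg k q (fun i => D i - (n i : ℕ∞))) :
    leDeg k (q + n) D := by
  intro i
  have hqi := hq i
  have hni := hn i
  by_cases hD : D i = ⊤
  · rw [hD]; exact le_top
  · lift D i to ℕ using hD with a ha
    rw [show ((a : ℕ∞) - (n i : ℕ∞)) = ((a - n i : ℕ) : ℕ∞) by
      exact_mod_cast (ENat.coe_sub a (n i)).symm] at hqi
    have h1 : q i ≤ a - n i := by exact_mod_cast hqi
    have h2 : n i ≤ a := by exact_mod_cast hni
    have h3 : q i + n i ≤ a := by omega
    show ((q i + n i : ℕ) : ℕ∞) ≤ (a : ℕ∞)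
    exact_mod_cast h3

/-- The shift `σ^n(x)` of a boundary path `x` by `n ≤ d(x)`. -/
def BPath.shift {k : ℕ} {Λ : KGraphData k} (x : BPath k Λ) (n : Fin k → ℕ)
    (h : leDeg k n x.deg) : BPath k Λ where
  deg := fun i => x.deg i - (n i : ℕ∞)
  vert := fun p => x.vert (p + n)
  seg := fun p q => x.seg (p + n) (q + n)
  seg_r := fun p q hpq hq =>
    x.seg_r (p + n) (q + n) (add_le_add_left hpq n) (leDeg_add h hq)
  seg_s := fun p q hpq hq =>
    x.seg_s (p + n) (q + n) (add_le_add_left hpq n) (leDeg_add h hq)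
  seg_deg := by
    intro p q hpq hq
    rw [x.seg_deg (p + n) (q + n) (add_le_add_left hpq n) (leDeg_add h hq)]
    funext i
    simp only [Pi.sub_apply, Pi.add_apply]
    omega
  seg_id := by
    intro p hp
    show x.seg (p + n) (p + n) = _
    rw [x.seg_id (p + n) (leDeg_add h hp)]
  seg_comp := fun p q t hpq hqt ht =>
    x.seg_comp (p + n) (q + n) (t + n) (add_le_add_left hpq n)
      (add_le_add_left hqt n) (leDeg_add h ht)
  boundary := by
    intro p i hp hpi e he
    refine x.boundary (p + n) i (leDeg_add h hp) ?_ e he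
    have hni := h i
    have hpi' : (p i : ℕ∞) = x.deg i - (n i : ℕ∞) := hpi
    clear hpi
    by_cases hD : x.deg i = ⊤
    · rw [hD] at hpi'
      simp at hpi'
    · lift x.deg i to ℕ using hD with a ha
      rw [show ((a : ℕ∞) - (n i : ℕ∞)) = ((a - n i : ℕ) : ℕ∞) by
        exact_mod_cast (ENat.coe_sub a (n i)).symm] at hpi'
      have h1 : p i = a - n i := by exact_mod_cast hpi'
      have h2 : n i ≤ a := by exact_mod_cast hni
      have h3 : p i + n i = a := by omega
      show ((p i + n i : ℕ) : ℕ∞) = (a : ℕ∞)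
      exact_mod_cast h3

/-- The relation `∼` on `V_Λ = Λ^{≤∞} × ℕ^k`. -/
def VRel {k : ℕ} {Λ : KGraphData k} (a b : BPath k Λ × (Fin k → ℕ)) : Prop :=
  a.1.vert (wedge a.2 a.1.deg) = b.1.vert (wedge b.2 b.1.deg) ∧
  a.2 - wedge a.2 a.1.deg = b.2 - wedge b.2 b.1.deg

/-- The relation `≈` on `P_Λ = {(x;(m,n)) : x ∈ Λ^{≤∞}, m ≤ n}`
(as a relation on all triples). -/
def PRel {k : ℕ} {Λ : KGraphData k}
    (a b : BPath k Λ × (Fin k → ℕ) × (Fin k → ℕ)) : Prop :=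
  a.1.seg (wedge a.2.1 a.1.deg) (wedge a.2.2 a.1.deg) =
    b.1.seg (wedge b.2.1 b.1.deg) (wedge b.2.2 b.1.deg) ∧
  a.2.1 - wedge a.2.1 a.1.deg = b.2.1 - wedge b.2.1 b.1.deg ∧
  a.2.2 - a.2.1 = b.2.2 - b.2.1

/-- `z` is the concatenation `λ x` of the morphism `lam` with the boundary path `x`:
`z` has degree `d(lam) + d(x)`, `z(0, d lam) = lam`, and
`z(d lam, d lam + p) = x(0, p)` for all `p ≤ d(x)`. -/
def IsConcat {k : ℕ} (Λ : KGraphData k) (lam : Λ.Mor) (x z : BPath k Λ) : Prop :=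
  z.deg = (fun i => (Λ.d lam i : ℕ∞) + x.deg i) ∧
  z.seg 0 (Λ.d lam) = lam ∧
  ∀ p, leDeg k p x.deg → z.seg (Λ.d lam) (Λ.d lam + p) = x.seg 0 p

/-- `Λ` has local periodicity `m, n` at the vertex `v`: for every boundary path
`x ∈ vΛ^{≤∞}`, `m − m∧d(x) = n − n∧d(x)` and `σ^{m∧d(x)}(x) = σ^{n∧d(x)}(x)`. -/
def LocalPeriodicity {k : ℕ} (Λ : KGraphData k) (m n : Fin k → ℕ) (v : Λ.Obj) : Prop :=
  ∀ x : BPath k Λ, x.vert 0 = v →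
    (m - wedge m x.deg = n - wedge n x.deg) ∧
    BPath.eqv (x.shift (wedge m x.deg) (wedge_leDeg m x.deg))
      (x.shift (wedge n x.deg) (wedge_leDeg n x.deg))

/-! Since `p ∧ d(x₀) = 0`, the boundary condition on `x₀` at its range gives `vΛ^{eᵢ} = ∅` whenever
`pᵢ ≠ 0`, so `p ∧ d(z) = 0` for every `z ∈ vΛ^{≤∞}` and the offset `p` in (i) disappears: (i) says
that `m - m ∧ d(z) = n - n ∧ d(z)` and that `σ^{m ∧ d(z)}(z)` and `σ^{n ∧ d(z)}(z)` have the same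
initial segments `(0, l ∧ d)`. By unique factorisation a boundary path is determined by its initial
segments, which gives (ii). -/

section Wedge

variable {k : ℕ}

lemma wedge_le (m : Fin k → ℕ) (D : Fin k → ℕ∞) : wedge m D ≤ m := fun i => by
  exact_mod_cast (wedge_coe m D i).trans_le inf_le_left

lemma wedge_eq_of_leDeg {q : Fin k → ℕ} {D : Fin k → ℕ∞} (h : leDeg k q D) : wedge q D = q := by
  funext i
  simp [wedge, inf_eq_left.mpr (h i)]

lemma wedge_apply_eq_zero_iff {p : Fin k → ℕ} {D : Fin k → ℕ∞} {i : Fin k} :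
    wedge p D i = 0 ↔ p i = 0 ∨ D i = 0 := by
  rw [← Nat.cast_inj (R := ℕ∞), wedge_coe]
  simp

lemma wedge_add_eq_of_wedge_eq_zero {p : Fin k → ℕ} {D : Fin k → ℕ∞} (hp : wedge p D = 0)
    (q : Fin k → ℕ) : wedge (p + q) D = wedge q D := by
  funext i
  rcases wedge_apply_eq_zero_iff.mp (congrFun hp i) with h | h <;> simp [wedge, h]

lemma wedge_add (m l : Fin k → ℕ) (D : Fin k → ℕ∞) :
    wedge (m + l) D = wedge m D + wedge l (fun i => D i - (wedge m D i : ℕ∞)) := by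
  funext i
  simp only [wedge, Pi.add_apply]
  by_cases hD : D i = ⊤
  · simp [hD, -Nat.cast_add]
  · lift D i to ℕ using hD with d
    simp only [← (Nat.mono_cast (α := ℕ∞)).map_min, ENat.toNat_natCast, ← ENat.natCast_sub]
    omega

lemma eq_of_forall_wedge_eq {D D' : Fin k → ℕ∞} (h : ∀ l, wedge l D = wedge l D') : D = D' := by
  funext i
  refine ENat.eq_of_forall_natCast_le_iff fun N => ?_
  have hN : (N : ℕ∞) ⊓ D i = (N : ℕ∞) ⊓ D' i := by
    rw [← wedge_coe (fun _ => N), ← wedge_coe (fun _ => N), h]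
  rw [← inf_eq_left, hN, inf_eq_left]

lemma leDeg_of_le {q q' : Fin k → ℕ} {D : Fin k → ℕ∞} (h : q ≤ q') (h' : leDeg k q' D) :
    leDeg k q D :=
  fun i => (Nat.cast_le.mpr (h i)).trans (h' i)

end Wedge

lemma IsKGraph.snd_eq_of_comp_eq {k : ℕ} {Λ : KGraphData k} (hΛ : IsKGraph Λ)
    {f g f' g' : Λ.Mor} (hfg : Λ.s f = Λ.r g) (hfg' : Λ.s f' = Λ.r g') (hf : Λ.d f = Λ.d f')
    (hg : Λ.d g = Λ.d g') (h : Λ.comp f g = Λ.comp f' g') : g = g' := by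
  obtain ⟨_, -, huniq⟩ := hΛ.factor (Λ.comp f g) (Λ.d f) (Λ.d g) (hΛ.d_comp f g hfg)
  exact congrArg Prod.snd <|
    (huniq (f, g) ⟨hfg, rfl, rfl, rfl⟩).trans (huniq (f', g') ⟨hfg', hf.symm, hg.symm, h.symm⟩).symm

namespace BPath

variable {k : ℕ} {Λ : KGraphData k}

lemma deg_eq_zero_of_vert_zero_eq {x z : BPath k Λ} (hzx : z.vert 0 = x.vert 0) {i : Fin k}
    (hx : x.deg i = 0) : z.deg i = 0 := by
  by_contra hz
  have hi : leDeg k (Pi.single i 1) z.deg := by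
    intro j
    by_cases hj : j = i
    · subst hj
      simpa using Order.one_le_iff_ne_zero.mpr hz
    · simp [hj]
  refine x.boundary 0 i (fun _ => by simp) (by simp [hx]) (z.seg 0 (Pi.single i 1)) ?_ ?_
  · rw [z.seg_r 0 _ zero_le hi, hzx]
  · rw [z.seg_deg 0 _ zero_le hi, tsub_zero]

lemma wedge_deg_eq_zero_of_vert_zero_eq {x z : BPath k Λ} (hzx : z.vert 0 = x.vert 0)
    {p : Fin k → ℕ} (hp : wedge p x.deg = 0) : wedge p z.deg = 0 := by
  funext i
  refine wedge_apply_eq_zero_iff.mpr ?_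
  exact (wedge_apply_eq_zero_iff.mp (congrFun hp i)).imp_right (deg_eq_zero_of_vert_zero_eq hzx)

lemma seg_eq_of_seg_zero_eq (hΛ : IsKGraph Λ) {y z : BPath k Λ} {q q' : Fin k → ℕ}
    (hqq' : q ≤ q') (hy : leDeg k q' y.deg) (hz : leDeg k q' z.deg)
    (h : y.seg 0 q = z.seg 0 q) (h' : y.seg 0 q' = z.seg 0 q') : y.seg q q' = z.seg q q' := by
  have hyq := leDeg_of_le hqq' hy
  have hzq := leDeg_of_le hqq' hz
  refine hΛ.snd_eq_of_comp_eq (f := y.seg 0 q) (f' := z.seg 0 q) ?_ ?_ (congrArg Λ.d h) ?_ ?_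
  · rw [y.seg_s 0 q zero_le hyq, y.seg_r q q' hqq' hy]
  · rw [z.seg_s 0 q zero_le hzq, z.seg_r q q' hqq' hz]
  · rw [y.seg_deg q q' hqq' hy, z.seg_deg q q' hqq' hz]
  · rw [y.seg_comp 0 q q' zero_le hqq' hy, z.seg_comp 0 q q' zero_le hqq' hz, h']

lemma eqv_iff_forall_seg_zero_wedge_eq (hΛ : IsKGraph Λ) (y z : BPath k Λ) :
    y.eqv z ↔ ∀ l, y.seg 0 (wedge l y.deg) = z.seg 0 (wedge l z.deg) := by
  refine ⟨fun ⟨hdeg, hseg⟩ l => ?_, fun h => ?_⟩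
  · rw [← hdeg]
    exact hseg 0 _ zero_le (wedge_leDeg _ _)
  have hdeg : y.deg = z.deg := eq_of_forall_wedge_eq fun l => by
    simpa [y.seg_deg 0 _ zero_le (wedge_leDeg _ _),
      z.seg_deg 0 _ zero_le (wedge_leDeg _ _)] using congrArg Λ.d (h l)
  have hinit : ∀ q, leDeg k q y.deg → y.seg 0 q = z.seg 0 q := fun q hq => by
    simpa [wedge_eq_of_leDeg hq, wedge_eq_of_leDeg (hdeg ▸ hq)] using h q
  exact ⟨hdeg, fun q q' hqq' hq' => seg_eq_of_seg_zero_eq hΛ hqq' hq' (hdeg ▸ hq')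
    (hinit q (leDeg_of_le hqq' hq')) (hinit q' hq')⟩

lemma seg_wedge_add_eq_shift_seg (x : BPath k Λ) (m l : Fin k → ℕ) :
    x.seg (wedge m x.deg) (wedge (m + l) x.deg) =
      (x.shift (wedge m x.deg) (wedge_leDeg m x.deg)).seg 0
        (wedge l (x.shift (wedge m x.deg) (wedge_leDeg m x.deg)).deg) := by
  show _ = x.seg (0 + wedge m x.deg) (wedge l _ + wedge m x.deg)
  rw [wedge_add, zero_add, add_comm]
  rfl

theorem forall_PRel_iff (hΛ : IsKGraph Λ) (x : BPath k Λ) {p : Fin k → ℕ}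
    (hp : wedge p x.deg = 0) (m n : Fin k → ℕ) :
    (∀ l, PRel (x, p + m, p + m + l) (x, p + n, p + n + l)) ↔
      m - wedge m x.deg = n - wedge n x.deg ∧
        (x.shift (wedge m x.deg) (wedge_leDeg m x.deg)).eqv
          (x.shift (wedge n x.deg) (wedge_leDeg n x.deg)) := by
  simp only [PRel, add_assoc p, wedge_add_eq_of_wedge_eq_zero hp, seg_wedge_add_eq_shift_seg,
    add_tsub_assoc_of_le (wedge_le _ _), add_right_inj, add_tsub_add_eq_tsub_left,
    add_tsub_cancel_left, and_true, eqv_iff_forall_seg_zero_wedge_eq hΛ, forall_and, forall_const]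
  exact and_comm

end BPath

theorem local_periodicity_projection_general (k : ℕ) (Λ : KGraphData k)
    (hΛ : IsKGraph Λ)
    (v : Λ.Obj) (m n p : Fin k → ℕ)
    (x0 : BPath k Λ) (hx0 : x0.vert 0 = v) (hp : wedge p x0.deg = 0) :
    (∀ z : BPath k Λ, z.vert 0 = v →
        ∀ l : Fin k → ℕ, PRel (z, p + m, p + m + l) (z, p + n, p + n + l)) ↔
      LocalPeriodicity Λ m n v :=
  forall_congr' fun z => forall_congr' fun hz =>
    z.forall_PRel_iff hΛ (BPath.wedge_deg_eq_zero_of_vert_zero_eq (hz.trans hx0.symm) hp) m n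

/-- Fix `v ∈ Λ⁰`, `m ≠ n` and `p` with `p ∧ d(x₀) = 0` for some
`x₀ ∈ vΛ^{≤∞}`. Then the desourcification has local periodicity `m, n` at the
vertex `[x₀;p]` (expressed by (i)) if and only if `Λ` has local periodicity
`m, n` at `v`. -/
theorem local_periodicity_projection (k : ℕ) (hk : 1 ≤ k) (Λ : KGraphData k)
    (hΛ : IsKGraph Λ) (hrf : RowFinite Λ) (hlc : LocallyConvex Λ)
    (v : Λ.Obj) (m n p : Fin k → ℕ) (hmn : m ≠ n)
    (x0 : BPath k Λ) (hx0 : x0.vert 0 = v) (hp : wedge p x0.deg = 0) :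
    (∀ z : BPath k Λ, z.vert 0 = v →
        ∀ l : Fin k → ℕ, PRel (z, p + m, p + m + l) (z, p + n, p + n + l)) ↔
      LocalPeriodicity Λ m n v :=
  local_periodicity_projection_general k Λ hΛ v m n p x0 hx0 hp
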